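/- Let d ≥ 1, let Λ be a finitely generated additive submonoid of (Fin d → ℕ), and let n, n' : Fin d → ℕ both satisfy ⟨n,u⟩ > 0 and ⟨n',u⟩ > 0 for every u ∈ Λ with u ≠ 0. Then the associated graded rings ⨁_{k} p_k(n)/p_{k+1}(n) and ⨁_{k} p_k(n')/p_{k+1}(n'), regarded as ℂ-algebras without their gradings, are isomorphic (both being isomorphic to AddMonoidAlgebra ℂ Λ), by an isomorphism matching the maximal graded ideals ⨁_{k ≥ 1} p_k(n)/p_{k+1}(n) and ⨁_{k ≥ 1} p_k(n')/p_{k+1}(n'). -/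

import Mathlib

noncomputable section

/-- Coefficient of a multivariate power series at an exponent `u : Fin d → ℕ`. -/
def coeffFun (d : ℕ) (φ : MvPowerSeries (Fin d) ℂ) (u : Fin d → ℕ) : ℂ :=
  MvPowerSeries.coeff (Finsupp.equivFunOnFinite.symm u) φ

/-- Support of a multivariate power series, as a set of exponents `u : Fin d → ℕ`. -/
def suppS (d : ℕ) (φ : MvPowerSeries (Fin d) ℂ) : Set (Fin d → ℕ) :=
  {u | coeffFun d φ u ≠ 0}

/-- The weight `⟨n,u⟩ = ∑ i, n i * u i`. -/
def wt {d : ℕ} (n u : Fin d → ℕ) : ℕ := ∑ i, n i * u i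

/-- The `n`-weighted order of a power series: the least weight of an exponent
in its support (junk value `0` for `φ = 0`, by `Nat.sInf_empty`). -/
def ordn (d : ℕ) (n : Fin d → ℕ) (φ : MvPowerSeries (Fin d) ℂ) : ℕ :=
  sInf (wt n '' suppS d φ)

lemma suppS_add (d : ℕ) (φ ψ : MvPowerSeries (Fin d) ℂ) :
    suppS d (φ + ψ) ⊆ suppS d φ ∪ suppS d ψ := by
  intro u hu
  by_contra h
  simp only [Set.mem_union, suppS, Set.mem_setOf_eq, not_or, not_not] at h hu
  apply hu
  show coeffFun d (φ + ψ) u = 0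
  have : coeffFun d (φ + ψ) u = coeffFun d φ u + coeffFun d ψ u := by
    simp [coeffFun, map_add]
  rw [this, h.1, h.2, add_zero]

/-- `ℂ[[Λ]]`: the subalgebra of `MvPowerSeries (Fin d) ℂ` of series with support
contained in the additive submonoid `Λ`; it is the analytic algebra of the germ
of the affine toric variety `Z^Λ = Spec ℂ[Λ]` at its zero-dimensional orbit. -/
def RL (d : ℕ) (Λ : AddSubmonoid (Fin d → ℕ)) : Subalgebra ℂ (MvPowerSeries (Fin d) ℂ) where
  carrier := {φ | suppS d φ ⊆ (Λ : Set (Fin d → ℕ))}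
  zero_mem' := by
    intro u hu
    exact absurd (by simp [coeffFun]) hu
  one_mem' := by
    intro u hu
    have h : coeffFun d 1 u ≠ 0 := hu
    rw [coeffFun, MvPowerSeries.coeff_one] at h
    have : Finsupp.equivFunOnFinite.symm u = 0 := by
      by_contra hne; exact h (if_neg hne)
    have hu0 : u = 0 := by
      have := congrArg Finsupp.equivFunOnFinite this
      rw [Equiv.apply_symm_apply] at this
      exact this.trans (funext fun _ => rfl)
    rw [hu0]; exact Λ.zero_mem
  add_mem' := by
    intro φ ψ hφ hψ u hu
    rcases suppS_add d φ ψ hu with h | h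
    · exact hφ h
    · exact hψ h
  mul_mem' := by
    intro φ ψ hφ hψ u hu
    have h : coeffFun d (φ * ψ) u ≠ 0 := hu
    rw [coeffFun, MvPowerSeries.coeff_mul] at h
    obtain ⟨p, hp, hne⟩ := Finset.exists_ne_zero_of_sum_ne_zero h
    first
      | rw [Finset.HasAntidiagonal.mem_antidiagonal] at hp
      | simp only [Finset.mem_antidiagonal] at hp
    have h1 : Finsupp.equivFunOnFinite p.1 ∈ Λ := by
      apply hφ
      show coeffFun d φ _ ≠ 0
      rw [coeffFun, Equiv.symm_apply_apply]
      exact left_ne_zero_of_mul hne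
    have h2 : Finsupp.equivFunOnFinite p.2 ∈ Λ := by
      apply hψ
      show coeffFun d ψ _ ≠ 0
      rw [coeffFun, Equiv.symm_apply_apply]
      exact right_ne_zero_of_mul hne
    have hsum : Finsupp.equivFunOnFinite p.1 + Finsupp.equivFunOnFinite p.2 = u := by
      have := congrArg Finsupp.equivFunOnFinite hp
      rw [Equiv.apply_symm_apply] at this
      rw [← this]
      exact (Finsupp.coe_add p.1 p.2).symm
    rw [← hsum]
    exact Λ.add_mem h1 h2
  algebraMap_mem' := by
    intro c u hu
    have h : coeffFun d (algebraMap ℂ (MvPowerSeries (Fin d) ℂ) c) u ≠ 0 := hu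
    rw [coeffFun] at h
    rw [show (algebraMap ℂ (MvPowerSeries (Fin d) ℂ) c) = (MvPowerSeries.C c : MvPowerSeries (Fin d) ℂ) from rfl,
      MvPowerSeries.coeff_C] at h
    have : Finsupp.equivFunOnFinite.symm u = 0 := by
      by_contra hne; exact h (if_neg hne)
    have hu0 : u = 0 := by
      have := congrArg Finsupp.equivFunOnFinite this
      rw [Equiv.apply_symm_apply] at this
      exact this.trans (funext fun _ => rfl)
    rw [hu0]; exact Λ.zero_mem

lemma suppS_nonempty (d : ℕ) (φ : MvPowerSeries (Fin d) ℂ) (hφ : φ ≠ 0) :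
    (suppS d φ).Nonempty := by
  have : ∃ v : Fin d →₀ ℕ, MvPowerSeries.coeff v φ ≠ 0 := by
    by_contra h
    push_neg at h
    exact hφ (MvPowerSeries.ext h)
  obtain ⟨v, hv⟩ := this
  refine ⟨Finsupp.equivFunOnFinite v, ?_⟩
  show coeffFun d φ _ ≠ 0
  rw [coeffFun, Equiv.symm_apply_apply]
  exact hv

lemma ordn_le (d : ℕ) (n : Fin d → ℕ) (φ : MvPowerSeries (Fin d) ℂ) (u : Fin d → ℕ)
    (hu : u ∈ suppS d φ) : ordn d n φ ≤ wt n u :=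
  Nat.sInf_le ⟨u, hu, rfl⟩

lemma le_ordn (d : ℕ) (n : Fin d → ℕ) (φ : MvPowerSeries (Fin d) ℂ) (k : ℕ) (hφ : φ ≠ 0)
    (h : ∀ u ∈ suppS d φ, k ≤ wt n u) : k ≤ ordn d n φ := by
  apply le_csInf
  · exact (suppS_nonempty d φ hφ).image _
  · rintro b ⟨u, hu, rfl⟩
    exact h u hu

lemma suppS_smul (d : ℕ) (c : ℂ) (φ : MvPowerSeries (Fin d) ℂ) :
    suppS d (c • φ) ⊆ suppS d φ := by
  intro u hu
  have h : coeffFun d (c • φ) u ≠ 0 := hu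
  have : coeffFun d (c • φ) u = c * coeffFun d φ u := by
    simp [coeffFun]
  rw [this] at h
  exact right_ne_zero_of_mul h

/-- The `k`-th step `p_k = {φ ∈ R | φ = 0 ∨ ord_n φ ≥ k}` of the filtration of a
subalgebra `R` of the power series ring induced by the `n`-weighted order,
as a `ℂ`-submodule of the power series ring. -/
def pP (d : ℕ) (R : Subalgebra ℂ (MvPowerSeries (Fin d) ℂ)) (n : Fin d → ℕ) (k : ℕ) :
    Submodule ℂ (MvPowerSeries (Fin d) ℂ) where
  carrier := {φ | φ ∈ R ∧ (φ = 0 ∨ k ≤ ordn d n φ)}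
  zero_mem' := ⟨R.zero_mem, Or.inl rfl⟩
  add_mem' := by
    rintro φ ψ ⟨hφR, hφ⟩ ⟨hψR, hψ⟩
    refine ⟨R.add_mem hφR hψR, ?_⟩
    by_cases h0 : φ + ψ = 0
    · exact Or.inl h0
    · refine Or.inr (le_ordn d n _ k h0 ?_)
      intro u hu
      rcases suppS_add d φ ψ hu with h | h
      · rcases hφ with h1 | h1
        · exact absurd h (by simp [h1, suppS, coeffFun])
        · exact le_trans h1 (ordn_le d n φ u h)
      · rcases hψ with h1 | h1
        · exact absurd h (by simp [h1, suppS, coeffFun])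
        · exact le_trans h1 (ordn_le d n ψ u h)
  smul_mem' := by
    rintro c φ ⟨hφR, hφ⟩
    refine ⟨R.smul_mem hφR c, ?_⟩
    by_cases h0 : c • φ = 0
    · exact Or.inl h0
    · refine Or.inr ?_
      rcases hφ with h1 | h1
      · exact absurd (by rw [h1, smul_zero]) h0
      · refine le_ordn d n _ k h0 ?_
        intro u hu
        exact le_trans h1 (ordn_le d n φ u (suppS_smul d c φ hu))

/-- The quotient module `p_k / p_{k+1}`. -/
abbrev grPiece (d : ℕ) (R : Subalgebra ℂ (MvPowerSeries (Fin d) ℂ)) (n : Fin d → ℕ)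
    (k : ℕ) :=
  ↥(pP d R n k) ⧸ (pP d R n (k + 1)).comap (pP d R n k).subtype

/-- `H_k`: the `ℂ`-span in `AddMonoidAlgebra ℂ Λ` of the monomials `X^u`
with `u ∈ Λ` and `⟨n,u⟩ = k`. -/
def HkSub (d : ℕ) (Λ : AddSubmonoid (Fin d → ℕ)) (n : Fin d → ℕ) (k : ℕ) :
    Submodule ℂ (AddMonoidAlgebra ℂ ↥Λ) :=
  Submodule.span ℂ {x | ∃ u : ↥Λ, wt n (u : Fin d → ℕ) = k ∧ x = AddMonoidAlgebra.single u 1}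

/-- The maximal graded ideal `𝔪_Λ` of `AddMonoidAlgebra ℂ Λ`, spanned by the
monomials `X^u` with `u ∈ Λ`, `u ≠ 0`. -/
def mIdl (d : ℕ) (Λ : AddSubmonoid (Fin d → ℕ)) : Ideal (AddMonoidAlgebra ℂ ↥Λ) :=
  Ideal.span {x | ∃ u : ↥Λ, u ≠ 0 ∧ x = AddMonoidAlgebra.single u 1}

/-- The family `e` of `ℂ`-linear isomorphisms `p_k/p_{k+1} ≃ H_k` realizes the canonical
graded isomorphism `gr R ≅ ℂ[Λ]`: each `e k` sends the class of `φ` to its `n`-initial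
form `in_n φ` (and the zero class to `0`), and the family is unital and multiplicative
with respect to the multiplication induced by that of `R`. -/
def IsGradedInitialFormIso (d : ℕ) (R : Subalgebra ℂ (MvPowerSeries (Fin d) ℂ))
    (Λ : AddSubmonoid (Fin d → ℕ)) (n : Fin d → ℕ)
    (e : ∀ k : ℕ, grPiece d R n k ≃ₗ[ℂ] ↥(HkSub d Λ n k)) : Prop :=
  (∀ (k : ℕ) (φ : MvPowerSeries (Fin d) ℂ) (hφ : φ ∈ pP d R n k),
      (fun u : ↥Λ =>
        ((e k (Submodule.Quotient.mk ⟨φ, hφ⟩) : ↥(HkSub d Λ n k)) :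
          AddMonoidAlgebra ℂ ↥Λ).coeff u) =
        fun u : ↥Λ => if wt n (u : Fin d → ℕ) = k then coeffFun d φ (u : Fin d → ℕ) else 0) ∧
  (∀ (k l : ℕ) (φ ψ : MvPowerSeries (Fin d) ℂ) (hφ : φ ∈ pP d R n k)
      (hψ : ψ ∈ pP d R n l) (hφψ : φ * ψ ∈ pP d R n (k + l)),
      ((e (k + l) (Submodule.Quotient.mk ⟨φ * ψ, hφψ⟩) : ↥(HkSub d Λ n (k + l))) :
          AddMonoidAlgebra ℂ ↥Λ) =
        ((e k (Submodule.Quotient.mk ⟨φ, hφ⟩) : ↥(HkSub d Λ n k)) : AddMonoidAlgebra ℂ ↥Λ) *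
        ((e l (Submodule.Quotient.mk ⟨ψ, hψ⟩) : ↥(HkSub d Λ n l)) : AddMonoidAlgebra ℂ ↥Λ)) ∧
  (∀ h1 : (1 : MvPowerSeries (Fin d) ℂ) ∈ pP d R n 0,
      ((e 0 (Submodule.Quotient.mk ⟨1, h1⟩) : ↥(HkSub d Λ n 0)) : AddMonoidAlgebra ℂ ↥Λ) =
        1)

/-! Send `φ ∈ p_k(n)` to its `n`-initial form: the weight-`k` part of `φ`, read in `ℂ[Λ]`. This
is a finite sum since `Λ` is finitely generated and `⟨n,·⟩` is positive on `Λ \ {0}`. Under the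
embedding `ℂ[Λ] ↪ ℂ[[x]]` it becomes the weighted homogeneous component of `φ`, hence it is
multiplicative with kernel `p_{k+1}(n)`; it is onto `H_k(n)` since an element of `H_k(n)`, viewed
as a power series, is its own initial form. So `gr_n R_Λ ≅ ℂ[Λ]` for every admissible `n`, the
`H_k(n)` being the grading of `ℂ[Λ]` by `⟨n,·⟩`, whose irrelevant ideal is `𝔪_Λ`. -/

open MvPowerSeries AddMonoidAlgebra

theorem AddSubmonoid.FG.finite_setOf_le {ι : Type*} [Fintype ι] [DecidableEq ι]
    {Λ : AddSubmonoid (ι → ℕ)} (hΛ : Λ.FG) (w : (ι → ℕ) →+ ℕ)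
    (hw : ∀ u ∈ Λ, u ≠ 0 → 0 < w u) (k : ℕ) :
    {u : Λ | w u ≤ k}.Finite := by
  obtain ⟨T, rfl⟩ := hΛ
  have hbound : ∀ u ∈ AddSubmonoid.closure (T : Set (ι → ℕ)), u ≤ w u • T.sup id := by
    intro u hu
    induction hu using AddSubmonoid.closure_induction with
    | mem t ht =>
      rcases eq_or_ne t 0 with rfl | ht0
      · exact zero_le
      · calc t ≤ T.sup id := Finset.le_sup (f := id) ht
          _ ≤ w t • T.sup id :=
            le_smul_of_one_le_left zero_le (hw t (AddSubmonoid.subset_closure ht) ht0)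
    | zero => simp
    | add u v _ _ hu hv => simpa [add_smul] using add_le_add hu hv
  refine ((Set.finite_Iic (k • T.sup id)).preimage Subtype.val_injective.injOn).subset ?_
  intro u hu
  exact (hbound u u.2).trans (nsmul_le_nsmul_left zero_le hu)

namespace MvPowerSeries

variable {σ R : Type*} [Semiring R]

theorem natCast_le_weightedOrder_iff (w : σ → ℕ) {f : MvPowerSeries σ R} {k : ℕ} :
    (k : ℕ∞) ≤ f.weightedOrder w ↔ ∀ v, coeff v f ≠ 0 → k ≤ Finsupp.weight w v := by
  refine ⟨fun h v hv => ?_, fun h => le_weightedOrder w fun v hv => ?_⟩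
  · exact_mod_cast h.trans (weightedOrder_le w hv)
  · by_contra hne
    exact absurd (h v hne) (by exact_mod_cast hv.not_ge)

theorem IsWeightedHomogeneous.natCast_le_weightedOrder {w : σ → ℕ} {f : MvPowerSeries σ R}
    {k : ℕ} (hf : f.IsWeightedHomogeneous w k) : (k : ℕ∞) ≤ f.weightedOrder w :=
  (natCast_le_weightedOrder_iff w).2 fun _ hv => (hf hv).ge

end MvPowerSeries

namespace AddSubmonoid

variable {d : ℕ} (Λ : AddSubmonoid (Fin d → ℕ))

def toFinsupp : Λ →+ (Fin d →₀ ℕ) :=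
  Finsupp.addEquivFunOnFinite.symm.toAddMonoidHom.comp Λ.subtype

@[simp] lemma coe_toFinsupp (u : Λ) : ⇑(Λ.toFinsupp u) = u :=
  Finsupp.addEquivFunOnFinite.apply_symm_apply _

lemma toFinsupp_injective : Function.Injective Λ.toFinsupp :=
  fun u u' h => Subtype.ext (by rw [← coe_toFinsupp, h, coe_toFinsupp])

def toMvPowerSeries : AddMonoidAlgebra ℂ Λ →+* MvPowerSeries (Fin d) ℂ :=
  MvPolynomial.coeToMvPowerSeries.ringHom.comp (mapDomainRingHom ℂ Λ.toFinsupp)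

lemma toMvPowerSeries_injective : Function.Injective Λ.toMvPowerSeries := by
  rw [toMvPowerSeries, RingHom.coe_comp]
  exact (MvPolynomial.coe_injective _ _).comp (mapDomain_injective Λ.toFinsupp_injective)

open Classical in
lemma coeff_toMvPowerSeries (x : AddMonoidAlgebra ℂ Λ) (v : Fin d →₀ ℕ) :
    coeff v (Λ.toMvPowerSeries x) = if h : ⇑v ∈ Λ then x.coeff ⟨v, h⟩ else 0 := by
  simp only [toMvPowerSeries, RingHom.comp_apply, MvPolynomial.coeToMvPowerSeries.ringHom_apply,
    MvPolynomial.coeff_coe, mapDomainRingHom_apply, MvPolynomial.coeff, coeff_mapDomain]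
  split_ifs with h
  · convert Finsupp.mapDomain_apply Λ.toFinsupp_injective x.coeff ⟨v, h⟩
    ext; simp
  · exact Finsupp.mapDomain_of_notMem_range _ _ fun ⟨u, hu⟩ => h (by simp [← hu])

end AddSubmonoid

section InitialForm

variable {d : ℕ} {Λ : AddSubmonoid (Fin d → ℕ)} (n : Fin d → ℕ)

def wtHom : (Fin d → ℕ) →+ ℕ where
  toFun := wt n
  map_zero' := by simp [wt]
  map_add' u v := by simp [wt, mul_add, Finset.sum_add_distrib]

lemma wt_coe_eq_weight (v : Fin d →₀ ℕ) : wt n v = Finsupp.weight n v := by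
  simp [wt, Finsupp.weight_apply, Finsupp.sum_fintype, mul_comm]

lemma finite_setOf_wt_eq (hΛ : Λ.FG) (hn : ∀ u ∈ Λ, u ≠ 0 → 0 < wt n u) (k : ℕ) :
    {u : Λ | wt n u = k}.Finite :=
  (hΛ.finite_setOf_le (wtHom n) hn k).subset fun _ hu => le_of_eq hu

@[simp] lemma coeffFun_coe (φ : MvPowerSeries (Fin d) ℂ) (v : Fin d →₀ ℕ) :
    coeffFun d φ v = coeff v φ := by
  simp [coeffFun]

lemma forall_mem_suppS_iff {φ : MvPowerSeries (Fin d) ℂ} {P : (Fin d → ℕ) → Prop} :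
    (∀ u ∈ suppS d φ, P u) ↔ ∀ v : Fin d →₀ ℕ, coeff v φ ≠ 0 → P v :=
  ⟨fun h v hv => h v (by simpa [suppS] using hv),
    fun h u hu => by simpa using h (Finsupp.equivFunOnFinite.symm u) hu⟩

lemma mem_RL_iff {φ : MvPowerSeries (Fin d) ℂ} :
    φ ∈ RL d Λ ↔ ∀ v : Fin d →₀ ℕ, coeff v φ ≠ 0 → ⇑v ∈ Λ :=
  forall_mem_suppS_iff

lemma le_ordn_iff {φ : MvPowerSeries (Fin d) ℂ} (hφ : φ ≠ 0) {k : ℕ} :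
    k ≤ ordn d n φ ↔ ∀ u ∈ suppS d φ, k ≤ wt n u :=
  ⟨fun h u hu => h.trans (ordn_le d n φ u hu), le_ordn d n φ k hφ⟩

lemma mem_pP_iff {R : Subalgebra ℂ (MvPowerSeries (Fin d) ℂ)} {k : ℕ}
    {φ : MvPowerSeries (Fin d) ℂ} :
    φ ∈ pP d R n k ↔ φ ∈ R ∧ (k : ℕ∞) ≤ φ.weightedOrder n := by
  change φ ∈ R ∧ (φ = 0 ∨ k ≤ ordn d n φ) ↔ _
  rcases eq_or_ne φ 0 with rfl | hφ
  · simp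
  · simp only [hφ, false_or, le_ordn_iff n hφ, forall_mem_suppS_iff,
      natCast_le_weightedOrder_iff, wt_coe_eq_weight]

abbrev wtOn (Λ : AddSubmonoid (Fin d → ℕ)) : Λ →+ ℕ := (wtHom n).comp Λ.subtype

lemma hkSub_eq_gradeBy : HkSub d Λ n = gradeBy ℂ (wtOn n Λ) := by
  funext k
  refine le_antisymm (Submodule.span_le.2 ?_) fun x hx => ?_
  · rintro _ ⟨u, rfl, rfl⟩
    exact single_mem_gradeBy _ u 1
  · rw [← sum_coeff_single x]
    refine Submodule.finsuppSum_mem _ _ _ _ fun u hu => ?_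
    rw [← mul_one (x.coeff u), ← smul_eq_mul, ← smul_single]
    exact Submodule.smul_mem _ _
      (Submodule.subset_span ⟨u, hx u (Finsupp.mem_support_iff.2 hu), rfl⟩)

variable (hfin : ∀ k, {u : Λ | wt n u = k}.Finite)

def initialForm (k : ℕ) : MvPowerSeries (Fin d) ℂ →ₗ[ℂ] AddMonoidAlgebra ℂ Λ where
  toFun φ := ofCoeff <|
    Finsupp.ofSupportFinite (fun u : Λ => if wt n u = k then coeffFun d φ u else 0)
      ((hfin k).subset fun _ hu => by_contra fun h => hu (if_neg h))
  map_add' φ ψ := by ext u; simp [coeffFun, Finsupp.ofSupportFinite_coe, ite_add_ite]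
  map_smul' c φ := by ext u; simp [coeffFun, Finsupp.ofSupportFinite_coe]

lemma coeff_initialForm (k : ℕ) (φ : MvPowerSeries (Fin d) ℂ) (u : Λ) :
    (initialForm n hfin k φ).coeff u = if wt n u = k then coeffFun d φ u else 0 :=
  rfl

lemma toMvPowerSeries_initialForm {k : ℕ} {φ : MvPowerSeries (Fin d) ℂ} (hφ : φ ∈ RL d Λ) :
    Λ.toMvPowerSeries (initialForm n hfin k φ) = weightedHomogeneousComponent n k φ := by
  ext v
  rw [Λ.coeff_toMvPowerSeries, coeff_weightedHomogeneousComponent, ← wt_coe_eq_weight]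
  split_ifs with hv hk hk
  · simp [coeff_initialForm, hk]
  · simp [coeff_initialForm, hk]
  · exact (by_contra fun h => hv (mem_RL_iff.1 hφ v h)).symm
  · rfl

lemma initialForm_mul {k l : ℕ} {φ ψ : MvPowerSeries (Fin d) ℂ} (hφ : φ ∈ pP d (RL d Λ) n k)
    (hψ : ψ ∈ pP d (RL d Λ) n l) :
    initialForm n hfin (k + l) (φ * ψ) = initialForm n hfin k φ * initialForm n hfin l ψ := by
  rw [mem_pP_iff] at hφ hψ
  apply Λ.toMvPowerSeries_injective
  rw [map_mul Λ.toMvPowerSeries, toMvPowerSeries_initialForm n hfin ((RL d Λ).mul_mem hφ.1 hψ.1),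
    toMvPowerSeries_initialForm n hfin hφ.1, toMvPowerSeries_initialForm n hfin hψ.1,
    weightedHomogeneousComponent_mul_of_le_weightedOrder hφ.2 hψ.2]

lemma initialForm_one : initialForm n hfin 0 (1 : MvPowerSeries (Fin d) ℂ) = 1 := by
  apply Λ.toMvPowerSeries_injective
  rw [map_one Λ.toMvPowerSeries, toMvPowerSeries_initialForm n hfin (RL d Λ).one_mem]
  ext v
  rw [coeff_weightedHomogeneousComponent, coeff_one]
  split_ifs <;> simp_all

lemma initialForm_eq_zero_iff {k : ℕ} {φ : MvPowerSeries (Fin d) ℂ}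
    (hφ : φ ∈ pP d (RL d Λ) n k) :
    initialForm n hfin k φ = 0 ↔ φ ∈ pP d (RL d Λ) n (k + 1) := by
  rw [mem_pP_iff] at hφ ⊢
  rw [← Λ.toMvPowerSeries_injective.eq_iff, map_zero, toMvPowerSeries_initialForm n hfin hφ.1]
  refine ⟨fun h => ⟨hφ.1, ?_⟩, fun h => weightedHomogeneousComponent_of_lt_weightedOrder_eq_zero ?_⟩
  · have hne : (k : ℕ∞) ≠ φ.weightedOrder n :=
      fun he => weightedHomogeneousComponent_of_weightedOrder he h
    exact_mod_cast Order.add_one_le_of_lt (hφ.2.lt_of_ne hne)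
  · exact lt_of_lt_of_le (by exact_mod_cast k.lt_succ_self) h.2

lemma initialForm_mem_hkSub (k : ℕ) (φ : MvPowerSeries (Fin d) ℂ) :
    initialForm n hfin k φ ∈ HkSub d Λ n k := by
  rw [hkSub_eq_gradeBy]
  intro u hu
  by_contra h
  exact Finsupp.mem_support_iff.1 hu (if_neg h)

lemma toMvPowerSeries_mem_RL (x : AddMonoidAlgebra ℂ Λ) : Λ.toMvPowerSeries x ∈ RL d Λ :=
  mem_RL_iff.2 fun v hv => by
    rw [Λ.coeff_toMvPowerSeries] at hv
    split_ifs at hv with h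
    · exact h
    · exact absurd rfl hv

lemma isWeightedHomogeneous_toMvPowerSeries {k : ℕ} {x : AddMonoidAlgebra ℂ Λ}
    (hx : x ∈ HkSub d Λ n k) : (Λ.toMvPowerSeries x).IsWeightedHomogeneous n k := by
  rw [hkSub_eq_gradeBy] at hx
  intro v hv
  rw [Λ.coeff_toMvPowerSeries] at hv
  split_ifs at hv with h
  · rw [← wt_coe_eq_weight]
    exact hx ⟨v, h⟩ (Finsupp.mem_support_iff.2 hv)
  · exact absurd rfl hv

lemma toMvPowerSeries_mem_pP {k : ℕ} {x : AddMonoidAlgebra ℂ Λ} (hx : x ∈ HkSub d Λ n k) :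
    Λ.toMvPowerSeries x ∈ pP d (RL d Λ) n k :=
  (mem_pP_iff n).2 ⟨toMvPowerSeries_mem_RL x,
    IsWeightedHomogeneous.natCast_le_weightedOrder (isWeightedHomogeneous_toMvPowerSeries n hx)⟩

lemma initialForm_toMvPowerSeries {k : ℕ} {x : AddMonoidAlgebra ℂ Λ} (hx : x ∈ HkSub d Λ n k) :
    initialForm n hfin k (Λ.toMvPowerSeries x) = x := by
  apply Λ.toMvPowerSeries_injective
  rw [toMvPowerSeries_initialForm n hfin (toMvPowerSeries_mem_RL x),
    ← isWeightedHomogeneous_iff_eq_weightedHomogeneousComponent.1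
      (isWeightedHomogeneous_toMvPowerSeries n hx)]

def initialFormPiece (k : ℕ) : pP d (RL d Λ) n k →ₗ[ℂ] HkSub d Λ n k :=
  ((initialForm n hfin k).comp (pP d (RL d Λ) n k).subtype).codRestrict _
    fun φ => initialForm_mem_hkSub n hfin k φ

lemma ker_initialFormPiece (k : ℕ) :
    LinearMap.ker (initialFormPiece n hfin k) =
      (pP d (RL d Λ) n (k + 1)).comap (pP d (RL d Λ) n k).subtype := by
  ext φ
  rw [LinearMap.mem_ker, Submodule.mem_comap, Submodule.subtype_apply,
    ← initialForm_eq_zero_iff n hfin φ.2, ← Submodule.coe_eq_zero]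
  rfl

lemma initialFormPiece_surjective (k : ℕ) : Function.Surjective (initialFormPiece n hfin k) :=
  fun x => ⟨⟨_, toMvPowerSeries_mem_pP n x.2⟩,
    Subtype.ext (initialForm_toMvPowerSeries n hfin x.2)⟩

def grPieceEquiv (k : ℕ) : grPiece d (RL d Λ) n k ≃ₗ[ℂ] HkSub d Λ n k :=
  (Submodule.quotEquivOfEq _ _ (ker_initialFormPiece n hfin k).symm).trans
    ((initialFormPiece n hfin k).quotKerEquivOfSurjective (initialFormPiece_surjective n hfin k))

lemma grPieceEquiv_mk (k : ℕ) (φ : pP d (RL d Λ) n k) :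
    (grPieceEquiv n hfin k (Submodule.Quotient.mk φ) : AddMonoidAlgebra ℂ Λ) =
      initialForm n hfin k φ := by
  rw [grPieceEquiv, LinearEquiv.trans_apply, Submodule.quotEquivOfEq_mk,
    LinearMap.quotKerEquivOfSurjective_apply_mk]
  rfl

theorem isGradedInitialFormIso_grPieceEquiv :
    IsGradedInitialFormIso d (RL d Λ) Λ n (grPieceEquiv n hfin) := by
  refine ⟨fun k φ hφ => ?_, fun k l φ ψ hφ hψ _ => ?_, fun _ => ?_⟩
  · funext u
    rw [grPieceEquiv_mk, coeff_initialForm]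
  · simp only [grPieceEquiv_mk]
    exact initialForm_mul n hfin hφ hψ
  · rw [grPieceEquiv_mk]
    exact initialForm_one n hfin

end InitialForm

section Grading

variable {d : ℕ} {Λ : AddSubmonoid (Fin d → ℕ)} (n : Fin d → ℕ)

theorem isInternal_hkSub : DirectSum.IsInternal (fun k => HkSub d Λ n k) := by
  rw [hkSub_eq_gradeBy]
  exact gradeBy.isInternal (wtOn n Λ)

lemma hkSub_le_mIdl {k : ℕ} (hk : 1 ≤ k) : HkSub d Λ n k ≤ (mIdl d Λ).restrictScalars ℂ := by
  refine Submodule.span_le.2 ?_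
  rintro _ ⟨u, rfl, rfl⟩
  refine Ideal.subset_span ⟨u, fun hu => ?_, rfl⟩
  simp [hu, wt] at hk

open HomogeneousIdeal in
theorem iSup_hkSub_eq_mIdl (hn : ∀ u ∈ Λ, u ≠ 0 → 0 < wt n u) :
    (⨆ k, ⨆ _ : 1 ≤ k, HkSub d Λ n k) = (mIdl d Λ).restrictScalars ℂ := by
  refine le_antisymm (iSup₂_le fun k hk => hkSub_le_mIdl n hk) fun x hx => ?_
  have hirr : mIdl d Λ ≤ (irrelevant (gradeBy ℂ (wtOn n Λ))).toIdeal := by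
    refine Ideal.span_le.2 ?_
    rintro _ ⟨u, hu, rfl⟩
    exact mem_irrelevant_of_mem _ (hn u u.2 (by simpa using hu)) (single_mem_gradeBy _ u 1)
  have hx' : x ∈ (irrelevant (gradeBy ℂ (wtOn n Λ))).toAddSubmonoid := hirr hx
  rw [irrelevant_eq_iSup] at hx'
  rw [← Submodule.mem_toAddSubmonoid]
  simp_rw [Submodule.iSup_toAddSubmonoid, hkSub_eq_gradeBy]
  exact hx'

end Grading

theorem gr_independent_of_divisor_general (d : ℕ) (Λ : AddSubmonoid (Fin d → ℕ))
    (hΛ : Λ.FG) (n n' : Fin d → ℕ)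
    (hn : ∀ u ∈ Λ, u ≠ (0 : Fin d → ℕ) → 0 < wt n u)
    (hn' : ∀ u ∈ Λ, u ≠ (0 : Fin d → ℕ) → 0 < wt n' u) :
    ∃ (e : ∀ k : ℕ, grPiece d (RL d Λ) n k ≃ₗ[ℂ] ↥(HkSub d Λ n k))
      (e' : ∀ k : ℕ, grPiece d (RL d Λ) n' k ≃ₗ[ℂ] ↥(HkSub d Λ n' k)),
      IsGradedInitialFormIso d (RL d Λ) Λ n e ∧
      IsGradedInitialFormIso d (RL d Λ) Λ n' e' ∧
      DirectSum.IsInternal (fun k : ℕ => HkSub d Λ n k) ∧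
      DirectSum.IsInternal (fun k : ℕ => HkSub d Λ n' k) ∧
      ((⨆ k : ℕ, ⨆ _ : 1 ≤ k, HkSub d Λ n k : Submodule ℂ (AddMonoidAlgebra ℂ ↥Λ)) :
          Set (AddMonoidAlgebra ℂ ↥Λ)) = (mIdl d Λ : Set (AddMonoidAlgebra ℂ ↥Λ)) ∧
      ((⨆ k : ℕ, ⨆ _ : 1 ≤ k, HkSub d Λ n' k : Submodule ℂ (AddMonoidAlgebra ℂ ↥Λ)) :
          Set (AddMonoidAlgebra ℂ ↥Λ)) = (mIdl d Λ : Set (AddMonoidAlgebra ℂ ↥Λ)) := by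
  have hfin := finite_setOf_wt_eq n hΛ hn
  have hfin' := finite_setOf_wt_eq n' hΛ hn'
  exact ⟨grPieceEquiv n hfin, grPieceEquiv n' hfin',
    isGradedInitialFormIso_grPieceEquiv n hfin, isGradedInitialFormIso_grPieceEquiv n' hfin',
    isInternal_hkSub n, isInternal_hkSub n',
    congrArg SetLike.coe (iSup_hkSub_eq_mIdl n hn),
    congrArg SetLike.coe (iSup_hkSub_eq_mIdl n' hn')⟩

/-- for two weight vectors `n, n'` positive on `Λ \ {0}`, the associated
graded rings `⨁ p_k(n)/p_{k+1}(n)` and `⨁ p_k(n')/p_{k+1}(n')`, regarded as (ungraded)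
`ℂ`-algebras, are isomorphic — both are isomorphic to `AddMonoidAlgebra ℂ Λ` via the
initial-form isomorphisms, matching the maximal graded ideals `⨁_{k ≥ 1}` with `𝔪_Λ` on
both sides. -/
theorem gr_independent_of_divisor (d : ℕ) (hd : 1 ≤ d) (Λ : AddSubmonoid (Fin d → ℕ))
    (hΛ : Λ.FG) (n n' : Fin d → ℕ)
    (hn : ∀ u ∈ Λ, u ≠ (0 : Fin d → ℕ) → 0 < wt n u)
    (hn' : ∀ u ∈ Λ, u ≠ (0 : Fin d → ℕ) → 0 < wt n' u) :
    ∃ (e : ∀ k : ℕ, grPiece d (RL d Λ) n k ≃ₗ[ℂ] ↥(HkSub d Λ n k))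
      (e' : ∀ k : ℕ, grPiece d (RL d Λ) n' k ≃ₗ[ℂ] ↥(HkSub d Λ n' k)),
      IsGradedInitialFormIso d (RL d Λ) Λ n e ∧
      IsGradedInitialFormIso d (RL d Λ) Λ n' e' ∧
      DirectSum.IsInternal (fun k : ℕ => HkSub d Λ n k) ∧
      DirectSum.IsInternal (fun k : ℕ => HkSub d Λ n' k) ∧
      ((⨆ k : ℕ, ⨆ _ : 1 ≤ k, HkSub d Λ n k : Submodule ℂ (AddMonoidAlgebra ℂ ↥Λ)) :
          Set (AddMonoidAlgebra ℂ ↥Λ)) = (mIdl d Λ : Set (AddMonoidAlgebra ℂ ↥Λ)) ∧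
      ((⨆ k : ℕ, ⨆ _ : 1 ≤ k, HkSub d Λ n' k : Submodule ℂ (AddMonoidAlgebra ℂ ↥Λ)) :
          Set (AddMonoidAlgebra ℂ ↥Λ)) = (mIdl d Λ : Set (AddMonoidAlgebra ℂ ↥Λ)) :=
  gr_independent_of_divisor_general d Λ hΛ n n' hn hn'
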